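/- Let H be a complex Hilbert space and let f, g ∈ H with f ≠ 0 or g ≠ 0. Then for all real numbers a, b: ‖a·f + b·g‖² ≥ ((‖f‖²·‖g‖² − (Re⟨f,g⟩)²)/(‖f‖² + ‖g‖²)) · (a² + b²) ≥ ((Im⟨f,g⟩)²/(‖f‖² + ‖g‖²)) · (a² + b²). -/

import Mathlib

/-! With `x = ‖f‖²`, `y = ‖g‖²`, `r = Re⟪f,g⟫`, the quantity `‖af + bg‖²` is the quadratic form of
the real Gram matrix `[[x, r], [r, y]]` at `(a, b)`. Its smallest eigenvalue is at least
`det / trace = (xy - r²)/(x + y)`, which gives the first bound; the second is Cauchy–Schwarz,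
`r² + (Im⟪f,g⟫)² = |⟪f,g⟫|² ≤ xy`. -/

theorem norm_real_smul_add_real_smul_sq {E : Type*} [NormedAddCommGroup E]
    [InnerProductSpace ℂ E] (x y : E) (a b : ℝ) :
    ‖a • x + b • y‖ ^ 2 =
      a ^ 2 * ‖x‖ ^ 2 + 2 * a * b * (inner ℂ x y).re + b ^ 2 * ‖y‖ ^ 2 := by
  rw [RCLike.real_smul_eq_coe_smul (K := ℂ) a x, RCLike.real_smul_eq_coe_smul (K := ℂ) b y,
    norm_add_sq (𝕜 := ℂ), inner_smul_real_left, inner_smul_real_right, norm_smul, norm_smul]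
  simp only [RCLike.norm_ofReal, mul_pow, sq_abs, Complex.smul_re, smul_eq_mul,
    RCLike.re_to_complex]
  ring

theorem re_inner_sq_add_im_inner_sq_le {E : Type*} [NormedAddCommGroup E]
    [InnerProductSpace ℂ E] (x y : E) :
    (inner ℂ x y).re ^ 2 + (inner ℂ x y).im ^ 2 ≤ ‖x‖ ^ 2 * ‖y‖ ^ 2 := by
  rw [← mul_pow, sq, sq, ← Complex.normSq_apply, ← Complex.sq_norm]
  gcongr
  exact norm_inner_le_norm x y

/-- The difference of the two sides is `(ax + br)² + (by + ar)²`. -/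
theorem det_mul_sq_add_sq_le_trace_mul (x y r a b : ℝ) :
    (x * y - r ^ 2) * (a ^ 2 + b ^ 2) ≤ (x + y) * (a ^ 2 * x + 2 * a * b * r + b ^ 2 * y) := by
  nlinarith [sq_nonneg (a * x + b * r), sq_nonneg (b * y + a * r)]

theorem norm_smul_add_smul_sq_ge_general {H : Type*} [NormedAddCommGroup H] [InnerProductSpace ℂ H]
    (f g : H) (a b : ℝ) :
    ((‖f‖ ^ 2 * ‖g‖ ^ 2 - (Complex.re (inner ℂ f g : ℂ)) ^ 2) / (‖f‖ ^ 2 + ‖g‖ ^ 2)) *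
        (a ^ 2 + b ^ 2) ≤ ‖a • f + b • g‖ ^ 2 ∧
      ((Complex.im (inner ℂ f g : ℂ)) ^ 2 / (‖f‖ ^ 2 + ‖g‖ ^ 2)) * (a ^ 2 + b ^ 2) ≤
        ((‖f‖ ^ 2 * ‖g‖ ^ 2 - (Complex.re (inner ℂ f g : ℂ)) ^ 2) / (‖f‖ ^ 2 + ‖g‖ ^ 2)) *
          (a ^ 2 + b ^ 2) := by
  constructor
  · rw [div_mul_eq_mul_div]
    refine div_le_of_le_mul₀ (by positivity) (by positivity) ?_
    rw [norm_real_smul_add_real_smul_sq, mul_comm _ (‖f‖ ^ 2 + ‖g‖ ^ 2)]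
    exact det_mul_sq_add_sq_le_trace_mul _ _ _ a b
  · have cauchy_schwarz := re_inner_sq_add_im_inner_sq_le f g
    gcongr
    linarith

/-- **A two-vector lower bound in Hilbert spaces.** For `f, g` in a complex Hilbert space,
not both zero, and all real `a, b`:
`‖af + bg‖² ≥ ((‖f‖²‖g‖² − (Re⟪f,g⟫)²)/(‖f‖² + ‖g‖²))(a² + b²)
            ≥ ((Im⟪f,g⟫)²/(‖f‖² + ‖g‖²))(a² + b²)`. -/
theorem norm_smul_add_smul_sq_ge {H : Type*} [NormedAddCommGroup H] [InnerProductSpace ℂ H]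
    (f g : H) (hfg : f ≠ 0 ∨ g ≠ 0) (a b : ℝ) :
    ((‖f‖ ^ 2 * ‖g‖ ^ 2 - (Complex.re (inner ℂ f g : ℂ)) ^ 2) / (‖f‖ ^ 2 + ‖g‖ ^ 2)) *
        (a ^ 2 + b ^ 2) ≤ ‖a • f + b • g‖ ^ 2 ∧
      ((Complex.im (inner ℂ f g : ℂ)) ^ 2 / (‖f‖ ^ 2 + ‖g‖ ^ 2)) * (a ^ 2 + b ^ 2) ≤
        ((‖f‖ ^ 2 * ‖g‖ ^ 2 - (Complex.re (inner ℂ f g : ℂ)) ^ 2) / (‖f‖ ^ 2 + ‖g‖ ^ 2)) *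
          (a ^ 2 + b ^ 2) :=
  norm_smul_add_smul_sq_ge_general f g a b
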